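/- Let M ∈ Matrix (Fin n) (Fin n) ℂ, and let M̄₁, …, M̄_k ∈ Matrix (Fin n) (Fin n) ℂ be invertible matrices. Suppose real numbers b₁, …, b_k satisfy b_ℓ ≤ inf_{v ≠ 0} Re(v* M̄_ℓ* M v)/‖M̄_ℓ v‖₂² for each ℓ ∈ [k]. Then max_{ℓ ∈ [k]} b_ℓ · σ_min(M̄_ℓ) ≤ σ_min(M), where σ_min denotes the smallest singular value. -/

import Mathlib

open Matrix

/-- Euclidean (ℓ²) norm of a complex vector. -/
noncomputable def vecNorm {n : ℕ} (v : Fin n → ℂ) : ℝ :=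
  Real.sqrt (∑ i, ‖v i‖ ^ 2)

/-- Smallest singular value of a square complex matrix. -/
noncomputable def sigmaMin {n : ℕ} (M : Matrix (Fin n) (Fin n) ℂ) : ℝ :=
  ⨅ v : {v : Fin n → ℂ // vecNorm v = 1}, vecNorm (M.mulVec v.1)

/-! For `b > 0`, the hypothesis `b ≤ inf_v Re(v* Ā* M v)/‖Ā v‖²` forces the infimum to be a
genuine one (an unbounded infimum of reals is `0`), so `b ‖Ā v‖² ≤ Re⟨Ā v, M v⟩ ≤ ‖Ā v‖ ‖M v‖`
by Cauchy–Schwarz, i.e. `b ‖Ā v‖ ≤ ‖M v‖` for every `v`; taking the infimum over unit vectors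
gives `b σ_min(Ā) ≤ σ_min(M)`. -/

section

variable {n : ℕ}

theorem vecNorm_nonneg (v : Fin n → ℂ) : 0 ≤ vecNorm v :=
  Real.sqrt_nonneg _

theorem vecNorm_eq_norm_toLp (v : Fin n → ℂ) :
    vecNorm v = ‖(WithLp.toLp 2 v : EuclideanSpace ℂ (Fin n))‖ :=
  (EuclideanSpace.norm_eq _).symm

theorem sum_norm_sq_eq_vecNorm_sq (v : Fin n → ℂ) : ∑ i, ‖v i‖ ^ 2 = vecNorm v ^ 2 := by
  rw [vecNorm_eq_norm_toLp, EuclideanSpace.norm_sq_eq]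

theorem re_star_dotProduct_le_vecNorm_mul (w u : Fin n → ℂ) :
    (star w ⬝ᵥ u).re ≤ vecNorm w * vecNorm u := by
  rw [vecNorm_eq_norm_toLp, vecNorm_eq_norm_toLp, dotProduct_comm,
    ← EuclideanSpace.inner_toLp_toLp]
  exact re_inner_le_norm (𝕜 := ℂ) _ _

theorem mul_vecNorm_le_of_le_div {b : ℝ} {w u : Fin n → ℂ}
    (h : b ≤ (star w ⬝ᵥ u).re / ∑ i, ‖w i‖ ^ 2) : b * vecNorm w ≤ vecNorm u := by
  rcases (vecNorm_nonneg w).eq_or_lt with hw | hw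
  · rw [← hw, mul_zero]
    exact vecNorm_nonneg u
  rw [sum_norm_sq_eq_vecNorm_sq, le_div_iff₀ (by positivity)] at h
  have := h.trans (re_star_dotProduct_le_vecNorm_mul w u)
  nlinarith

theorem sigmaMin_nonneg (M : Matrix (Fin n) (Fin n) ℂ) : 0 ≤ sigmaMin M :=
  Real.iInf_nonneg fun _ => vecNorm_nonneg _

theorem sigmaMin_le_vecNorm_mulVec (M : Matrix (Fin n) (Fin n) ℂ) {v : Fin n → ℂ}
    (hv : vecNorm v = 1) : sigmaMin M ≤ vecNorm (M *ᵥ v) :=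
  ciInf_le (f := fun v : {v : Fin n → ℂ // vecNorm v = 1} => vecNorm (M *ᵥ v.1))
    ⟨0, Set.forall_mem_range.2 fun _ => vecNorm_nonneg _⟩ ⟨v, hv⟩

theorem star_dotProduct_conjTranspose_mul_mulVec (A B : Matrix (Fin n) (Fin n) ℂ)
    (v : Fin n → ℂ) : star v ⬝ᵥ (Aᴴ * B) *ᵥ v = star (A *ᵥ v) ⬝ᵥ B *ᵥ v := by
  rw [← mulVec_mulVec, dotProduct_mulVec, ← star_mulVec]

theorem mul_sigmaMin_le_sigmaMin {M A : Matrix (Fin n) (Fin n) ℂ} {b : ℝ}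
    (hb : b ≤ ⨅ v : {v : Fin n → ℂ // v ≠ 0},
      (star v.1 ⬝ᵥ (Aᴴ * M) *ᵥ v.1).re / ∑ i, ‖(A *ᵥ v.1) i‖ ^ 2) :
    b * sigmaMin A ≤ sigmaMin M := by
  rcases le_or_gt b 0 with hb0 | hb0
  · exact (mul_nonpos_of_nonpos_of_nonneg hb0 (sigmaMin_nonneg A)).trans (sigmaMin_nonneg M)
  have hbdd : BddBelow (Set.range fun v : {v : Fin n → ℂ // v ≠ 0} =>
      (star v.1 ⬝ᵥ (Aᴴ * M) *ᵥ v.1).re / ∑ i, ‖(A *ᵥ v.1) i‖ ^ 2) := by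
    by_contra h
    rw [Real.iInf_of_not_bddBelow h] at hb
    linarith
  have hmulVec (v : Fin n → ℂ) : b * vecNorm (A *ᵥ v) ≤ vecNorm (M *ᵥ v) := by
    by_cases hv : v = 0
    · simp [hv, vecNorm]
    refine mul_vecNorm_le_of_le_div ?_
    rw [← star_dotProduct_conjTranspose_mul_mulVec]
    exact hb.trans (ciInf_le hbdd ⟨v, hv⟩)
  cases isEmpty_or_nonempty {v : Fin n → ℂ // vecNorm v = 1} with
  | inl _ => simp [sigmaMin, Real.iInf_of_isEmpty]
  | inr _ =>
    refine le_ciInf fun ⟨v, hv⟩ => ?_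
    exact (mul_le_mul_of_nonneg_left (sigmaMin_le_vecNorm_mulVec A hv) hb0.le).trans (hmulVec v)

end

theorem stmt12_general {n k : ℕ} (M : Matrix (Fin n) (Fin n) ℂ)
    (Mb : Fin k → Matrix (Fin n) (Fin n) ℂ)
    (b : Fin k → ℝ)
    (hb : ∀ ℓ, b ℓ ≤ ⨅ v : {v : Fin n → ℂ // v ≠ 0},
      (star v.1 ⬝ᵥ ((Mb ℓ)ᴴ * M).mulVec v.1).re / ∑ i, ‖(Mb ℓ).mulVec v.1 i‖ ^ 2) :
    (⨆ ℓ : Fin k, b ℓ * sigmaMin (Mb ℓ)) ≤ sigmaMin M :=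
  Real.iSup_le (fun ℓ => mul_sigmaMin_le_sigmaMin (hb ℓ)) (sigmaMin_nonneg M)

/-- The final NNSCM lower-bound prediction: if `b_ℓ` is a lower bound for the
linearized stability factor `inf_{v ≠ 0} Re(v* M̄_ℓ* M v)/‖M̄_ℓ v‖₂²` for each `ℓ`,
then `max_ℓ b_ℓ·σ_min(M̄_ℓ) ≤ σ_min(M)`. -/
theorem stmt12 {n k : ℕ} (hk : 0 < k) (M : Matrix (Fin n) (Fin n) ℂ)
    (Mb : Fin k → Matrix (Fin n) (Fin n) ℂ) (hMb : ∀ ℓ, IsUnit (Mb ℓ))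
    (b : Fin k → ℝ)
    (hb : ∀ ℓ, b ℓ ≤ ⨅ v : {v : Fin n → ℂ // v ≠ 0},
      (star v.1 ⬝ᵥ ((Mb ℓ)ᴴ * M).mulVec v.1).re / ∑ i, ‖(Mb ℓ).mulVec v.1 i‖ ^ 2) :
    (⨆ ℓ : Fin k, b ℓ * sigmaMin (Mb ℓ)) ≤ sigmaMin M :=
  stmt12_general M Mb b hb
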